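/- arXiv:1602.01010 — 3 statements merged into one kernel-verified Lean document; each statement's English description precedes it below -/
import Mathlib

section
/- Let k be a field of characteristic not 2 and let α ∈ k^× be a sum of n+1 squares in k. Then in GW(k), 2^n⟨α⟩ = 2^n⟨1⟩. -/
/-!
Write `α = β + c²` with `β` a sum of `n + 1` squares. When `β, c ≠ 0`, the chain relation for
`β + c² = α` together with `⟨c²⟩ = 1` gives `⟨β⟩ + 1 = ⟨α⟩ + ⟨α⟩⟨β⟩`, i.e.
`(1 - ⟨α⟩)(1 + ⟨β⟩) = 0`. Adding `(1 - ⟨α⟩)(1 - ⟨β⟩)`, which `2ⁿ` kills by induction, shows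
that `2ⁿ⁺¹` kills `1 - ⟨α⟩`.
-/

/-- The relations ideal defining the Grothendieck–Witt ring of a field `k`
(characteristic ≠ 2) by its standard presentation: generators `⟨a⟩` for
`a ∈ kˣ` (multiplicative via the group algebra), with relations
`⟨a²⟩ = 1` and the chain relation `⟨a⟩ + ⟨b⟩ = ⟨a+b⟩ + ⟨(a+b)ab⟩` when `a + b ≠ 0`. -/
noncomputable def GWIdeal (k : Type) [Field k] : Ideal (MonoidAlgebra ℤ kˣ) :=
  Ideal.span { x | (∃ a : kˣ, x = MonoidAlgebra.of ℤ kˣ (a * a) - 1) ∨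
    (∃ a b c : kˣ, ((a : k) + (b : k) = (c : k)) ∧
      x = MonoidAlgebra.of ℤ kˣ a + MonoidAlgebra.of ℤ kˣ b
        - MonoidAlgebra.of ℤ kˣ c - MonoidAlgebra.of ℤ kˣ (c * a * b)) }

/-- The Grothendieck–Witt ring of a field `k` of characteristic ≠ 2. -/
def GW (k : Type) [Field k] : Type := MonoidAlgebra ℤ kˣ ⧸ GWIdeal k

noncomputable instance (k : Type) [Field k] : CommRing (GW k) :=
  Ideal.Quotient.commRing (GWIdeal k)

/-- The class `⟨a⟩` of the one-dimensional quadratic form `x ↦ a x²` in `GW k`. -/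
noncomputable def GWform (k : Type) [Field k] (a : kˣ) : GW k :=
  Ideal.Quotient.mk (GWIdeal k) (MonoidAlgebra.of ℤ kˣ a)

lemma GWform_one (k : Type) [Field k] : GWform k 1 = 1 := by
  unfold GWform; rw [map_one, map_one]; rfl

lemma GWform_mul (k : Type) [Field k] (a b : kˣ) :
    GWform k (a * b) = GWform k a * GWform k b := by
  unfold GWform; rw [map_mul, map_mul]; rfl

lemma GWform_mul_self (k : Type) [Field k] (a : kˣ) : GWform k (a * a) = 1 := by
  have hmem : MonoidAlgebra.of ℤ kˣ (a * a) - 1 ∈ GWIdeal k :=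
    Ideal.subset_span (Or.inl ⟨a, rfl⟩)
  rw [← Ideal.Quotient.eq_zero_iff_mem, map_sub, map_one] at hmem
  exact sub_eq_zero.mp hmem

lemma GWform_add_GWform (k : Type) [Field k] {a b c : kˣ} (h : (a : k) + b = c) :
    GWform k a + GWform k b = GWform k c + GWform k (c * a * b) := by
  have hmem : MonoidAlgebra.of ℤ kˣ a + MonoidAlgebra.of ℤ kˣ b
      - MonoidAlgebra.of ℤ kˣ c - MonoidAlgebra.of ℤ kˣ (c * a * b) ∈ GWIdeal k :=
    Ideal.subset_span (Or.inr ⟨a, b, c, h, rfl⟩)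
  rw [← Ideal.Quotient.eq_zero_iff_mem, map_sub, map_sub, map_add, sub_sub, sub_eq_zero] at hmem
  exact hmem

lemma GWform_eq_one_of_val_eq_sq (k : Type) [Field k] {a : kˣ} {x : k} (h : (a : k) = x ^ 2) :
    GWform k a = 1 := by
  have hx : x ≠ 0 := by rintro rfl; simp at h
  have : a = Units.mk0 x hx * Units.mk0 x hx := by ext; simp [h, sq]
  rw [this, GWform_mul_self]

lemma one_sub_GWform_mul_one_add_GWform_of_add_sq (k : Type) [Field k] {a b c : kˣ}
    (h : (a : k) + (c : k) ^ 2 = b) :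
    (1 - GWform k b) * (1 + GWform k a) = 0 := by
  have hchain := GWform_add_GWform k (a := a) (b := c * c) (c := b)
    (by rw [Units.val_mul, ← sq, h])
  rw [GWform_mul_self, GWform_mul, GWform_mul_self, mul_one, GWform_mul] at hchain
  linear_combination hchain

lemma two_pow_mul_one_sub_GWform_of_sum_sq (k : Type) [Field k] (n : ℕ) (α : kˣ)
    (x : Fin (n + 1) → k) (hx : (α : k) = ∑ i, x i ^ 2) :
    (2 : GW k) ^ n * (1 - GWform k α) = 0 := by
  induction n generalizing α with
  | zero =>
    rw [Fin.sum_univ_one] at hx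
    rw [GWform_eq_one_of_val_eq_sq k hx, sub_self, mul_zero]
  | succ n ih =>
    rw [Fin.sum_univ_castSucc] at hx
    set β := ∑ i : Fin (n + 1), x i.castSucc ^ 2
    set c := x (Fin.last (n + 1))
    by_cases hβ : β = 0
    · rw [GWform_eq_one_of_val_eq_sq k (x := c) (by rw [hx, hβ, zero_add]), sub_self, mul_zero]
    have hkillβ := ih (Units.mk0 β hβ) (fun i => x i.castSucc) rfl
    by_cases hc : c = 0
    · have hαβ : α = Units.mk0 β hβ := by ext; simp [hx, hc]
      rw [hαβ, pow_succ, mul_right_comm, hkillβ, zero_mul]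
    have hrel := one_sub_GWform_mul_one_add_GWform_of_add_sq k (a := Units.mk0 β hβ)
      (c := Units.mk0 c hc) (b := α) (by simp [hx])
    linear_combination (2 : GW k) ^ n * hrel + (1 - GWform k α) * hkillβ

theorem stmt1_general (k : Type) [Field k] (n : ℕ) (α : kˣ)
    (hα : ∃ x : Fin (n + 1) → k, (α : k) = ∑ i, x i ^ 2) :
    (2 ^ n : ℤ) • GWform k α = (2 ^ n : ℤ) • GWform k 1 := by
  obtain ⟨x, hx⟩ := hα
  have hkill := two_pow_mul_one_sub_GWform_of_sum_sq k n α x hx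
  rw [GWform_one, zsmul_eq_mul, zsmul_eq_mul]
  push_cast
  linear_combination -hkill

/-- If `α ∈ kˣ` is a sum of `n + 1` squares in a field `k` of characteristic ≠ 2,
then `2ⁿ⟨α⟩ = 2ⁿ⟨1⟩` in `GW(k)`. -/
theorem stmt1 (k : Type) [Field k] (h2 : (2 : k) ≠ 0) (n : ℕ) (α : kˣ)
    (hα : ∃ x : Fin (n + 1) → k, (α : k) = ∑ i, x i ^ 2) :
    (2 ^ n : ℤ) • GWform k α = (2 ^ n : ℤ) • GWform k 1 :=
  stmt1_general k n α hα
end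

section
/- Let k be a field of characteristic not 2 and α ∈ k^×. If there exist positive integers a, b with a⟨1⟩ = b⟨2,2α⟩ in GW(k), then α is a sum of squares in k. -/
/-!
An ordering of `k` induces a ring homomorphism `GW(k) → ℤ`, the signature, sending `⟨u⟩` to the
sign of `u`. If `α` is not a sum of squares, then adjoining `-α` to the sums of squares gives a
proper preordering, which extends by Zorn's lemma to an ordering in which `α < 0`. Its signature
turns `a⟨1⟩ = b⟨2, 2α⟩` into `a = b (1 - 1) = 0`.
-/

theorem isSumSq_of_isSumSq_neg_one {F : Type*} [Field F] (h2 : (2 : F) ≠ 0)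
    (h : IsSumSq (-1 : F)) (x : F) : IsSumSq x := by
  have hx : x = (x + 1) / 2 * ((x + 1) / 2) + -1 * ((x - 1) / 2 * ((x - 1) / 2)) := by
    field_simp; ring
  rw [hx]
  exact .add (.mul_self _) (h.mul (.mul_self _))

namespace RingPreordering

variable {F : Type*} [Field F]

def sumSq (h : ¬ IsSumSq (-1 : F)) : RingPreordering F where
  toSubsemiring := Subsemiring.sumSq F
  mem_of_isSquare' hx := by simpa using hx.isSumSq
  neg_one_notMem' := by simpa using h

@[simp] theorem mem_sumSq {h : ¬ IsSumSq (-1 : F)} {x : F} : x ∈ sumSq h ↔ IsSumSq x := by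
  simp [sumSq]

def adjoin (P : RingPreordering F) {a : F} (ha : -a ∉ P) : RingPreordering F :=
  mk' {x | ∃ p ∈ P, ∃ q ∈ P, x = p + a * q}
    (by
      rintro _ _ ⟨p, hp, q, hq, rfl⟩ ⟨p', hp', q', hq', rfl⟩
      exact ⟨p + p', add_mem hp hp', q + q', add_mem hq hq', by ring⟩)
    (by
      rintro _ _ ⟨p, hp, q, hq, rfl⟩ ⟨p', hp', q', hq', rfl⟩
      exact ⟨p * p' + a * a * (q * q'), add_mem (mul_mem hp hp') (mul_mem (P.mul_self_mem a)
        (mul_mem hq hq')), p * q' + p' * q, add_mem (mul_mem hp hq') (mul_mem hp' hq), by ring⟩)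
    (fun x ↦ ⟨x * x, P.mul_self_mem x, 0, zero_mem P, by ring⟩)
    (by
      rintro ⟨p, hp, q, hq, h⟩
      rcases eq_or_ne q 0 with rfl | hq0
      · exact P.neg_one_notMem (by simpa [h] using hp)
      · refine ha ?_
        have : -a = (1 + p) * q * (q⁻¹ * q⁻¹) := by
          field_simp
          linear_combination h
        rw [this]
        exact mul_mem (mul_mem (add_mem (one_mem P) hp) hq) (P.mul_self_mem _))

theorem bddAbove_of_isChain {c : Set (RingPreordering F)} (hc : IsChain (· ≤ ·) c)
    (hne : c.Nonempty) : BddAbove c := by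
  obtain ⟨Q, hQ⟩ := hne
  refine ⟨mk' (⋃ P ∈ c, (P : Set F)) ?_ ?_ ?_ ?_, fun P hP x hx ↦ Set.mem_biUnion hP hx⟩
  · simp only [Set.mem_iUnion, SetLike.mem_coe]
    rintro x y ⟨P, hP, hx⟩ ⟨P', hP', hy⟩
    rcases hc.total hP hP' with h | h
    · exact ⟨P', hP', add_mem (h hx) hy⟩
    · exact ⟨P, hP, add_mem hx (h hy)⟩
  · simp only [Set.mem_iUnion, SetLike.mem_coe]
    rintro x y ⟨P, hP, hx⟩ ⟨P', hP', hy⟩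
    rcases hc.total hP hP' with h | h
    · exact ⟨P', hP', mul_mem (h hx) hy⟩
    · exact ⟨P, hP, mul_mem hx (h hy)⟩
  · exact fun x ↦ Set.mem_biUnion hQ (Q.mul_self_mem x)
  · simp only [Set.mem_iUnion, SetLike.mem_coe, not_exists]
    exact fun P _ ↦ P.neg_one_notMem

variable (P : RingPreordering F) {a : F} (ha : -a ∉ P)

theorem le_adjoin : P ≤ P.adjoin ha :=
  fun p hp ↦ ⟨p, hp, 0, zero_mem P, by ring⟩

theorem mem_adjoin_self : a ∈ P.adjoin ha :=
  ⟨0, zero_mem P, 1, one_mem P, by ring⟩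

theorem exists_le_hasMemOrNegMem : ∃ O : RingPreordering F, P ≤ O ∧ HasMemOrNegMem O := by
  obtain ⟨O, hPO, hO⟩ := zorn_le_nonempty₀ Set.univ
    (fun c _ hc Q hQ ↦ (bddAbove_of_isChain hc ⟨Q, hQ⟩).imp fun _ h ↦ ⟨trivial, h⟩) P trivial
  refine ⟨O, hPO, ⟨fun x ↦ or_iff_not_imp_right.2 fun hx ↦ ?_⟩⟩
  exact hO.eq_of_ge trivial (O.le_adjoin hx) ▸ O.mem_adjoin_self hx

theorem exists_linearOrder_nonneg_iff (O : RingPreordering F) [HasMemOrNegMem O] :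
    ∃ _ : LinearOrder F, IsStrictOrderedRing F ∧ ∀ x : F, 0 ≤ x ↔ x ∈ O := by
  classical
  let C : RingCone F :=
    { O.toSubsemiring with eq_zero_of_mem_of_neg_mem' := RingPreordering.eq_zero_of_mem_of_neg_mem }
  have : HasMemOrNegMem C := ⟨HasMemOrNegMem.mem_or_neg_mem O⟩
  let := LinearOrder.mkOfAddGroupCone C
  have := IsOrderedRing.mkOfCone C
  exact ⟨_, inferInstance, fun x ↦ show x - 0 ∈ C ↔ x ∈ O by simp [C]⟩

end RingPreordering

theorem exists_linearOrder_neg_of_not_isSumSq {F : Type*} [Field F] (h2 : (2 : F) ≠ 0) {x : F}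
    (hx : ¬ IsSumSq x) : ∃ _ : LinearOrder F, IsStrictOrderedRing F ∧ x < 0 := by
  have h1 : ¬ IsSumSq (-1 : F) := fun h ↦ hx (isSumSq_of_isSumSq_neg_one h2 h x)
  have hP : -(-x) ∉ RingPreordering.sumSq h1 := by simpa using hx
  obtain ⟨O, hPO, _⟩ := ((RingPreordering.sumSq h1).adjoin hP).exists_le_hasMemOrNegMem
  obtain ⟨_, _, hO⟩ := O.exists_linearOrder_nonneg_iff
  have hx0 : x ≠ 0 := by rintro rfl; exact hx .zero
  refine ⟨_, inferInstance, lt_of_le_of_ne ?_ hx0⟩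
  simpa using (hO (-x)).2 (hPO (RingPreordering.mem_adjoin_self _ hP))

section Signature

variable {F : Type} [Field F] [LinearOrder F] [IsStrictOrderedRing F]

theorem sign_add_sign_eq_sign_add_add_sign_mul {a b : F} (ha : a ≠ 0) (hb : b ≠ 0)
    (hab : a + b ≠ 0) :
    (SignType.sign a : ℤ) + SignType.sign b =
      SignType.sign (a + b) + SignType.sign ((a + b) * a * b) := by
  rcases ha.lt_or_gt with ha | ha <;> rcases hb.lt_or_gt with hb | hb <;>
    rcases hab.lt_or_gt with hab | hab
  all_goals first
    | linarith
    | simp [sign_mul, sign_pos, sign_neg, mul_pos_of_neg_of_neg, mul_neg_of_pos_of_neg,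
        mul_neg_of_neg_of_pos, *]

variable (F) in
noncomputable def unitsSign : Fˣ →* ℤ :=
  (SignType.castHom : SignType →*₀ ℤ).toMonoidHom.comp
    ((signHom : F →*₀ SignType).toMonoidHom.comp (Units.coeHom F))

theorem unitsSign_apply (u : Fˣ) : unitsSign F u = SignType.sign (u : F) := rfl

variable (F) in
noncomputable def signature : GW F →+* ℤ :=
  Ideal.Quotient.lift (GWIdeal F) (MonoidAlgebra.lift ℤ ℤ Fˣ (unitsSign F)).toRingHom <| by
    refine fun _ hx ↦ (Ideal.span_le (I := RingHom.ker _)).2 ?_ hx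
    rintro _ (⟨u, rfl⟩ | ⟨u, v, w, huvw, rfl⟩) <;>
      simp only [SetLike.mem_coe, RingHom.mem_ker, AlgHom.toRingHom_eq_coe, RingHom.coe_coe, map_sub,
        map_add, map_one, MonoidAlgebra.lift_of, unitsSign_apply, Units.val_mul]
    · simp [sign_pos (mul_self_pos.2 u.ne_zero)]
    · rw [← huvw]
      have := sign_add_sign_eq_sign_add_add_sign_mul u.ne_zero v.ne_zero (huvw ▸ w.ne_zero)
      omega

theorem signature_GWform (u : Fˣ) : signature F (GWform F u) = SignType.sign (u : F) :=
  (Ideal.Quotient.lift_mk _ _ _).trans (MonoidAlgebra.lift_of _ _)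

end Signature

theorem stmt4_general (k : Type) [Field k] (h2 : (2 : k) ≠ 0) (α : kˣ) (a b : ℕ)
    (ha : 0 < a)
    (hab : (a : ℤ) • GWform k 1 =
      (b : ℤ) •
        (GWform k (Units.mk0 (2 : k) h2) + GWform k (Units.mk0 (2 : k) h2 * α))) :
    IsSumSq (α : k) := by
  by_contra hα
  obtain ⟨_, _, hα_neg⟩ := exists_linearOrder_neg_of_not_isSumSq h2 hα
  have hsig := congrArg (signature k) hab
  have h2α : SignType.sign (2 * (α : k)) = -1 := sign_neg (mul_neg_of_pos_of_neg two_pos hα_neg)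
  simp [signature_GWform, h2α] at hsig
  omega

/-- If `a⟨1⟩ = b⟨2, 2α⟩` in `GW(k)` for some positive integers `a, b`, then
`α` is a sum of squares in `k` (char `k` ≠ 2). -/
theorem stmt4 (k : Type) [Field k] (h2 : (2 : k) ≠ 0) (α : kˣ) (a b : ℕ)
    (ha : 0 < a) (hb : 0 < b)
    (hab : (a : ℤ) • GWform k 1 =
      (b : ℤ) •
        (GWform k (Units.mk0 (2 : k) h2) + GWform k (Units.mk0 (2 : k) h2 * α))) :
    IsSumSq (α : k) :=
  stmt4_general k h2 α a b ha hab
end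

section
/- Let L/k be a finite Galois extension of fields with Gal(L/k) ≅ ℤ/4ℤ. Then the unique intermediate quadratic subextension E of L/k has the form E = k(√α) where α = a² + b² for some a, b ∈ k^×. -/
/-!
Let `σ` generate `Gal(L/k)`. As `σ²` is a nontrivial involution there is `θ ≠ 0` with
`σ²θ = -θ`, and then `s = θ·σθ` satisfies `σs = -s`; so `E = k(s)` with `s² = D ∈ k` not
a square. The element `y = σθ/θ ∈ E` has norm `y·σy = σ²θ/θ = -1`, so writing
`y = x + z s` gives `x² - D z² = -1`, and such a relation forces `D` to be a sum of two
nonzero squares.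
-/

open IntermediateField Module

theorem exists_forall_mem_zpowers_orderOf_eq {G : Type*} [Group G] {n : ℕ}
    (e : G ≃* Multiplicative (ZMod n)) :
    ∃ σ : G, (∀ g, g ∈ Subgroup.zpowers σ) ∧ orderOf σ = n := by
  have : IsCyclic G := e.isCyclic.mpr inferInstance
  obtain ⟨σ, hσ⟩ := IsCyclic.exists_generator (α := G)
  refine ⟨σ, hσ, ?_⟩
  rw [orderOf_eq_card_of_forall_mem_zpowers hσ,
    Nat.card_congr (e.toEquiv.trans Multiplicative.toAdd), Nat.card_zmod]

theorem AlgEquiv.exists_ne_zero_apply_eq_neg {R A : Type*} [CommSemiring R] [Ring A]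
    [Algebra R A] {τ : A ≃ₐ[R] A} (hτ : τ ≠ 1) (hτ2 : τ * τ = 1) :
    ∃ θ : A, θ ≠ 0 ∧ τ θ = -θ := by
  obtain ⟨u, hu⟩ : ∃ u, τ u ≠ u := by
    by_contra! h
    exact hτ (AlgEquiv.ext h)
  refine ⟨u - τ u, sub_ne_zero.mpr (Ne.symm hu), ?_⟩
  rw [map_sub, ← AlgEquiv.mul_apply, hτ2, AlgEquiv.one_apply, neg_sub]

theorem exists_sum_sq_of_sq_sub_mul_sq_eq_neg_one {K : Type*} [Field K] (h2 : (2 : K) ≠ 0)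
    {D x z : K} (hD : ¬ IsSquare D) (h : x ^ 2 - D * z ^ 2 = -1) :
    ∃ a b : K, a ≠ 0 ∧ b ≠ 0 ∧ D = a ^ 2 + b ^ 2 := by
  by_cases hz : z = 0
  · -- `x` is a square root of `-1`, and `D = ((D + 1) / 2)² - ((D - 1) / 2)²`
    have hx : x ^ 2 = -1 := by simpa [hz] using h
    have hD1 : D - 1 ≠ 0 := fun h1 => hD ⟨1, by linear_combination h1⟩
    have hD1' : D + 1 ≠ 0 := fun h1 => hD ⟨x, by linear_combination h1 - hx⟩
    have hx0 : x ≠ 0 := by rintro rfl; norm_num at hx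
    refine ⟨(D + 1) / 2, x * (D - 1) / 2, by positivity, by positivity, ?_⟩
    field_simp
    linear_combination (-(D - 1) ^ 2) * hx
  · have hx : x ≠ 0 := by
      rintro rfl
      exact hD ⟨z⁻¹, by field_simp; linear_combination -h⟩
    exact ⟨x / z, 1 / z, div_ne_zero hx hz, one_div_ne_zero hz, by
      field_simp; linear_combination -h⟩

section Galois

variable {K L : Type*} [Field K] [Field L] [Algebra K L]

theorem mem_bot_of_forall_mem_zpowers_of_apply_eq_self [IsGalois K L] [FiniteDimensional K L]
    {σ : L ≃ₐ[K] L} (hσ : ∀ g, g ∈ Subgroup.zpowers σ) {x : L} (hx : σ x = x) :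
    x ∈ (⊥ : IntermediateField K L) :=
  (IsGalois.mem_bot_iff_fixed x).mpr fun g =>
    Subgroup.zpowers_le.mpr (show σ ∈ MulAction.stabilizer (L ≃ₐ[K] L) x from hx) (hσ g)

theorem notMem_bot_of_apply_eq_neg (h2 : (2 : K) ≠ 0) {σ : L ≃ₐ[K] L} {s : L} (hs : s ≠ 0)
    (hσs : σ s = -s) : s ∉ (⊥ : IntermediateField K L) := by
  intro hsK
  obtain ⟨c, rfl⟩ := mem_bot.mp hsK
  rw [AlgEquiv.commutes, eq_neg_iff_add_eq_zero, ← map_add, ← two_mul] at hσs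
  simp_all

theorem not_isSquare_of_sq_eq_algebraMap {s : L} {D : K} (hs : s ^ 2 = algebraMap K L D)
    (hsK : s ∉ (⊥ : IntermediateField K L)) : ¬ IsSquare D := by
  rintro ⟨c, rfl⟩
  rw [← sq, map_pow, sq_eq_sq_iff_eq_or_eq_neg] at hs
  rcases hs with rfl | rfl
  exacts [hsK (IntermediateField.algebraMap_mem _ c),
    hsK (neg_mem (IntermediateField.algebraMap_mem _ c))]

open Polynomial in
theorem isIntegral_of_sq_eq_algebraMap {s : L} {D : K} (hs : s ^ 2 = algebraMap K L D) :
    IsIntegral K s :=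
  ⟨X ^ 2 - C D, monic_X_pow_sub_C D two_ne_zero, by simp [hs]⟩

open Polynomial in
theorem finrank_adjoin_simple_eq_two_of_sq_eq_algebraMap {s : L} {D : K}
    (hs : s ^ 2 = algebraMap K L D) (hsK : s ∉ (⊥ : IntermediateField K L)) :
    finrank K K⟮s⟯ = 2 := by
  have hint := isIntegral_of_sq_eq_algebraMap hs
  rw [adjoin.finrank hint]
  refine le_antisymm ?_ ((minpoly.two_le_natDegree_iff hint).mpr (by simpa [mem_bot] using hsK))
  calc (minpoly K s).natDegree ≤ (X ^ 2 - C D).natDegree :=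
        natDegree_le_natDegree (minpoly.min K s (monic_X_pow_sub_C D two_ne_zero) (by simp [hs]))
    _ = 2 := natDegree_X_pow_sub_C

theorem algebra_adjoin_adjoinSimple_gen_eq_top {s : L} (hs : IsIntegral K s) :
    Algebra.adjoin K {AdjoinSimple.gen K s} = ⊤ := by
  rw [← adjoin.powerBasis_gen hs]
  exact (adjoin.powerBasis hs).adjoin_gen_eq_top

theorem exists_sq_sub_mul_sq_eq_neg_one {σ : L ≃ₐ[K] L}
    (hfix : ∀ x, σ x = x → x ∈ (⊥ : IntermediateField K L)) (h2 : (2 : K) ≠ 0) {θ : L}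
    (hθ : θ ≠ 0) (hσθ : σ (σ θ) = -θ) {D : K} (hD : algebraMap K L D = (θ * σ θ) ^ 2) :
    ∃ x z : K, x ^ 2 - D * z ^ 2 = -1 := by
  -- `x + z θσθ = σθ/θ`, an element of norm `-1`
  have h2L : (2 : L) ≠ 0 := by
    rw [← map_ofNat (algebraMap K L) 2]
    exact (map_ne_zero _).mpr h2
  have hσθ0 : σ θ ≠ 0 := (map_ne_zero σ).mpr hθ
  obtain ⟨x, hx⟩ := mem_bot.mp <| hfix ((σ θ ^ 2 - θ ^ 2) / (2 * θ * σ θ)) <| by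
    simp only [map_div₀, map_sub, map_mul, map_pow, map_ofNat, hσθ]
    field_simp
    ring
  obtain ⟨z, hz⟩ := mem_bot.mp <| hfix ((θ ^ 2 + σ θ ^ 2) / (2 * θ ^ 2 * σ θ ^ 2)) <| by
    simp only [map_div₀, map_add, map_mul, map_pow, map_ofNat, hσθ]
    field_simp
    ring
  refine ⟨x, z, (algebraMap K L).injective ?_⟩
  simp only [map_sub, map_mul, map_pow, map_neg, map_one, hx, hz, hD]
  field_simp
  ring

end Galois

/-- If `L/k` is a finite Galois extension (char `k` ≠ 2) with Galois group cyclic of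
order 4, then there is an intermediate field `E = k(√α)` of degree 2 over `k`
where `α = a² + b²` for some `a, b ∈ kˣ`. -/
theorem stmt8 (k L : Type) [Field k] [Field L] [Algebra k L]
    [FiniteDimensional k L] [IsGalois k L] (h2 : (2 : k) ≠ 0)
    (hcyc : Nonempty ((L ≃ₐ[k] L) ≃* Multiplicative (ZMod 4))) :
    ∃ (α a b : k), a ≠ 0 ∧ b ≠ 0 ∧ α = a ^ 2 + b ^ 2 ∧
      ∃ E : IntermediateField k L, Module.finrank k E = 2 ∧
        ∃ s : E, s ^ 2 = algebraMap k E α ∧ Algebra.adjoin k {s} = ⊤ := by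
  obtain ⟨σ, hgen, hord⟩ := exists_forall_mem_zpowers_orderOf_eq hcyc.some
  have hfix (x : L) (hx : σ x = x) : x ∈ (⊥ : IntermediateField k L) :=
    mem_bot_of_forall_mem_zpowers_of_apply_eq_self hgen hx
  obtain ⟨θ, hθ, hσθ⟩ := AlgEquiv.exists_ne_zero_apply_eq_neg (τ := σ ^ 2)
    (pow_ne_one_of_lt_orderOf two_ne_zero (by omega))
    (by rw [← pow_add, show 2 + 2 = orderOf σ by omega, pow_orderOf_eq_one])
  rw [sq, AlgEquiv.mul_apply] at hσθ
  set s := θ * σ θ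
  have hσs : σ s = -s := by rw [map_mul, hσθ, mul_neg, mul_comm]
  have hsK : s ∉ (⊥ : IntermediateField k L) :=
    notMem_bot_of_apply_eq_neg h2 (mul_ne_zero hθ ((map_ne_zero σ).mpr hθ)) hσs
  obtain ⟨D, hD⟩ := mem_bot.mp (hfix (s ^ 2) (by rw [map_pow, hσs, neg_sq]))
  obtain ⟨x, z, hxz⟩ := exists_sq_sub_mul_sq_eq_neg_one hfix h2 hθ hσθ hD
  obtain ⟨a, b, ha, hb, hab⟩ := exists_sum_sq_of_sq_sub_mul_sq_eq_neg_one h2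
    (not_isSquare_of_sq_eq_algebraMap hD.symm hsK) hxz
  refine ⟨D, a, b, ha, hb, hab, k⟮s⟯,
    finrank_adjoin_simple_eq_two_of_sq_eq_algebraMap hD.symm hsK,
    AdjoinSimple.gen k s, Subtype.ext hD.symm,
    algebra_adjoin_adjoinSimple_gen_eq_top (isIntegral_of_sq_eq_algebraMap hD.symm)⟩
end
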